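/- arXiv:2001.07118 — 5 statements merged into one kernel-verified Lean document; each statement's English description precedes it below -/
import Mathlib

section
/- Let G be a single-decision causal influence diagram and X a variable of G other than the decision D. Then G is compatible with a control incentive on X if and only if G contains a directed path from the decision D to some utility node U that passes through X, i.e. a path of the form D ⇝ X ⇝ U. -/
attribute [local instance] Classical.propDecidable

noncomputable section

/-! ### d-separation in a directed graph -/

/-- `b` is a collider on a path segment `a - b - c`. -/
def IsCollider {V : Type} (E : V → V → Prop) (a b c : V) : Prop := E a b ∧ E c b

/-- The triple `a - b - c` on an undirected path blocks the path w.r.t. `Z`: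
either the middle node is a non-collider (chain or fork) belonging to `Z`, or it is a
collider such that neither it nor any of its descendants belongs to `Z`. -/
def BlockedTriple {V : Type} (E : V → V → Prop) (Z : Set V) (a b c : V) : Prop :=
  (¬ IsCollider E a b c ∧ b ∈ Z) ∨
    (IsCollider E a b c ∧ ∀ w, Relation.ReflTransGen E b w → w ∉ Z)

/-- An undirected path: a nonempty list of distinct vertices in which consecutive
vertices are joined by an edge in one direction or the other. -/
def IsUPath {V : Type} (E : V → V → Prop) (p : List V) : Prop :=
  p ≠ [] ∧ p.Nodup ∧ p.Chain' (fun a b => E a b ∨ E b a)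

/-- A path is d-separated (blocked) by `Z` if some consecutive triple blocks it. -/
def BlockedPath {V : Type} (E : V → V → Prop) (Z : Set V) (p : List V) : Prop :=
  ∃ l₁ a b c l₂, p = l₁ ++ a :: b :: c :: l₂ ∧ BlockedTriple E Z a b c

/-- `Z` d-separates the node sets `S` and `T`: every undirected path from a node of `S`
to a node of `T` is blocked by `Z`. -/
def DSep {V : Type} (E : V → V → Prop) (S T Z : Set V) : Prop :=
  ∀ p : List V, IsUPath E p → (∃ s ∈ S, p.head? = some s) →
    (∃ t ∈ T, p.getLast? = some t) → BlockedPath E Z p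

/-! ### Causal influence diagrams and structural causal influence models -/

/-- A single-decision causal influence diagram: a finite DAG whose vertices are
partitioned into structure nodes, one decision node and utility nodes
(the utility nodes having no children). -/
structure CID (V : Type) where
  edge : V → V → Prop
  acyclic : ∀ v, ¬ Relation.TransGen edge v v
  decision : V
  utility : Finset V
  decision_not_utility : decision ∉ utility
  utility_no_children : ∀ u ∈ utility, ∀ v, ¬ edge u v

/-- A (single-decision) structural causal influence model over a CID: finite nonempty
domains for every variable, one finite-domain exogenous variable per variable, structural
functions for every non-decision variable, real-valued (injectively embedded, i.e. the
domain is a subset of ℝ) utility variables, and mutually independent exogenous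
distributions. -/
structure SCIM (V : Type) extends CID V where
  dom : V → Type
  dom_fintype : ∀ v, Fintype (dom v)
  dom_nonempty : ∀ v, Nonempty (dom v)
  edom : V → Type
  edom_fintype : ∀ v, Fintype (edom v)
  edom_nonempty : ∀ v, Nonempty (edom v)
  utilVal : ∀ v, dom v → ℝ
  utilVal_inj : ∀ v ∈ utility, Function.Injective (utilVal v)
  f : ∀ v, v ≠ decision → (∀ w, edge w v → dom w) → edom v → dom v
  μ : ∀ v, edom v → ℝ
  μ_nonneg : ∀ v e, 0 ≤ μ v e
  μ_sum : ∀ v, ∑ e ∈ @Finset.univ (edom v) (edom_fintype v), μ v e = 1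

variable {V : Type} [Fintype V] [DecidableEq V]

instance (M : SCIM V) (v : V) : Fintype (M.dom v) := M.dom_fintype v
instance (M : SCIM V) (v : V) : Nonempty (M.dom v) := M.dom_nonempty v
instance (M : SCIM V) (v : V) : Fintype (M.edom v) := M.edom_fintype v
instance (M : SCIM V) (v : V) : Nonempty (M.edom v) := M.edom_nonempty v

namespace SCIM

variable (M : SCIM V)

/-- A joint setting of the exogenous variables. -/
abbrev Env := ∀ v, M.edom v

/-- Joint probability of an exogenous setting (the exogenous variables are independent). -/
def prob (ε : M.Env) : ℝ := ∏ v, M.μ v (ε v)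

/-- The type of structural mechanisms for the vertex `v`. -/
def Mechanism (v : V) : Type := (∀ w, M.edge w v → M.dom w) → M.edom v → M.dom v

/-- A policy: a structural function for the decision node. -/
abbrev Policy := M.Mechanism M.decision

theorem edge_wf : WellFounded M.edge := by
  haveI : IsTrans V (Relation.TransGen M.edge) := ⟨fun _ _ _ h h' => h.trans h'⟩
  haveI : IsIrrefl V (Relation.TransGen M.edge) := ⟨M.acyclic⟩
  exact Subrelation.wf (fun h => Relation.TransGen.single h)
    (Finite.wellFounded_of_trans_of_irrefl _)

/-- The unique solution of the structural equations `mech` given exogenous setting `ε`. -/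
def solve (mech : ∀ v, M.Mechanism v) (ε : M.Env) : ∀ v, M.dom v :=
  WellFounded.fix (C := fun v => M.dom v) M.edge_wf
    (fun v IH => mech v (fun w hw => IH w hw) (ε v))

/-- The mechanisms of the SCM `M_π` obtained by fixing the policy `π`. -/
def polMech (π : M.Policy) : ∀ v, M.Mechanism v :=
  fun v => if h : v = M.decision then cast (congrArg M.Mechanism h).symm π else M.f v h

/-- Apply an intervention (a partial assignment `ι` of values) to mechanisms:
intervened variables are set to constants. -/
def doMech (mech : ∀ v, M.Mechanism v) (ι : ∀ v, Option (M.dom v)) : ∀ v, M.Mechanism v :=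
  fun v => match ι v with
    | some x => fun _ _ => x
    | none => mech v

/-- The single intervention `do(X = x)` as a partial assignment. -/
def single (X : V) (x : M.dom X) : ∀ v, Option (M.dom v) :=
  fun v => if h : v = X then some (cast (congrArg M.dom h).symm x) else none

/-- The value `W(ε)` of each variable in `M_π`. -/
def val (π : M.Policy) (ε : M.Env) : ∀ v, M.dom v := M.solve (M.polMech π) ε

/-- The potential response: the value of each variable in the submodel of `M_π`
given by the intervention `ι`. -/
def valDo (π : M.Policy) (ι : ∀ v, Option (M.dom v)) (ε : M.Env) : ∀ v, M.dom v :=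
  M.solve (M.doMech (M.polMech π) ι) ε

/-- Total utility of an assignment of values to the variables. -/
def totUtil (a : ∀ v, M.dom v) : ℝ := ∑ v ∈ M.utility, M.utilVal v (a v)

/-- Expected total utility of the policy `π`. -/
def EU (π : M.Policy) : ℝ := ∑ ε : M.Env, M.prob ε * M.totUtil (M.val π ε)

/-- An optimal policy maximizes expected total utility. -/
def Optimal (π : M.Policy) : Prop := ∀ π' : M.Policy, M.EU π' ≤ M.EU π

/-- A decision context: a joint value of the parents of the decision. -/
abbrev Ctx := ∀ w, M.edge w M.decision → M.dom w

/-- The decision context realized by the exogenous setting `ε` in `M_π`. -/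
def ctx (π : M.Policy) (ε : M.Env) : M.Ctx := fun w _ => M.val π ε w

/-- Probability of a decision context in `M_π`. -/
def ctxProb (π : M.Policy) (pa : M.Ctx) : ℝ :=
  ∑ ε : M.Env, if M.ctx π ε = pa then M.prob ε else 0

/-- Conditional expectation of `g` given the decision context `pa` in `M_π`. -/
def condExp (π : M.Policy) (pa : M.Ctx) (g : M.Env → ℝ) : ℝ :=
  (∑ ε : M.Env, if M.ctx π ε = pa then M.prob ε * g ε else 0) / M.ctxProb π pa

/-- The nested potential response `𝒰_{X_d}(ε)`: total utility when `X` is set to the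
value it would take under `do(D = d)`, everything else following `M_π`. -/
def nestedU (π : M.Policy) (X : V) (d : M.dom M.decision) (ε : M.Env) : ℝ :=
  M.totUtil (M.valDo π (M.single X (M.valDo π (M.single M.decision d) ε X)) ε)

/-- Control incentive on `X`: under every optimal policy, in some positive-probability
decision context some alternative decision `d` changes expected utility through `X`. -/
def ControlIncentive (X : V) : Prop :=
  ∀ π : M.Policy, M.Optimal π →
    ∃ pa : M.Ctx, 0 < M.ctxProb π pa ∧ ∃ d : M.dom M.decision,
      M.condExp π pa (M.nestedU π X d) ≠
        M.condExp π pa (fun ε => M.totUtil (M.val π ε))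

/-- Response incentive on `X`: under every optimal policy some intervention on `X`
changes the decision for some exogenous setting. -/
def ResponseIncentive (X : V) : Prop :=
  ∀ π : M.Policy, M.Optimal π →
    ∃ (x : M.dom X) (ε : M.Env),
      M.valDo π (M.single X x) ε M.decision ≠ M.val π ε M.decision

/-- Conditional probability of `event` given `cond` in `M_π`. -/
def cprob (π : M.Policy) (event cond : M.Env → Prop) : ℝ :=
  (∑ ε : M.Env, if cond ε ∧ event ε then M.prob ε else 0) /
    (∑ ε : M.Env, if cond ε then M.prob ε else 0)

/-- Counterfactual fairness of a policy `π` with respect to a protected attribute `A`: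
conditional on any positive-probability decision context and value of `A`, intervening
on `A` does not change the distribution of the decision. -/
def CFair (π : M.Policy) (A : V) : Prop :=
  ∀ (d : M.dom M.decision) (pa : M.Ctx) (a a' : M.dom A),
    (0 < ∑ ε : M.Env, if M.ctx π ε = pa ∧ M.val π ε A = a then M.prob ε else 0) →
      M.cprob π (fun ε => M.valDo π (M.single A a') ε M.decision = d)
          (fun ε => M.ctx π ε = pa ∧ M.val π ε A = a) =
        M.cprob π (fun ε => M.val π ε M.decision = d)
          (fun ε => M.ctx π ε = pa ∧ M.val π ε A = a)

/-- Expected value of the sum of utility variables in `S`. -/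
def EUOn (S : Finset V) (π : M.Policy) : ℝ :=
  ∑ ε : M.Env, M.prob ε * ∑ v ∈ S, M.utilVal v (M.val π ε v)

/-- The policy obtained from `π` by replacing the observations of the decision-parents
that are descendants of `X` by the fixed values `p`. -/
def modPolicy (π : M.Policy) (X : V) (p : M.Ctx) : M.Policy :=
  fun pa e =>
    π (fun w hw => if Relation.ReflTransGen M.edge X w then p w hw else pa w hw) e

end SCIM

/-- The graphical criterion for control incentives: a directed path `D ⇝ X ⇝ U`
for some utility node `U`. -/
def CICriterion {V : Type} (G : CID V) (X : V) : Prop :=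
  Relation.ReflTransGen G.edge G.decision X ∧
    ∃ u ∈ G.utility, Relation.ReflTransGen G.edge X u

/-- The graphical criterion for response incentives: a directed path from `X` to some
parent `W` of the decision `D`, a directed path from `D` to some utility node `U`, and
`W` d-connected to `U` given `({D} ∪ Pa_D) \ {W}`. -/
def RICriterion {V : Type} (G : CID V) (X : V) : Prop :=
  ∃ W, G.edge W G.decision ∧ ∃ u ∈ G.utility,
    Relation.ReflTransGen G.edge X W ∧
    Relation.ReflTransGen G.edge G.decision u ∧
    ¬ DSep G.edge {W} {u} (({G.decision} ∪ {w | G.edge w G.decision}) \ {W})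

end

/-! Soundness: an intervention only affects descendants of the intervened variable, so
without a path `D ⇝ X` the value `X_d` is just `X` (and re-setting `X` to its own value
changes nothing), while without a path `X ⇝ U` intervening on `X` leaves every utility
unchanged. Either way `𝒰_{X_d} = 𝒰` pointwise, for every policy, in particular for an optimal
one (which exists: there are finitely many policies).

Completeness: given `D ⇝ X ⇝ U`, make every variable Boolean, every non-decision variable the
conjunction of its parents and every utility worth `1` when true. The policy `D = true` makes
all variables true and attains the maximal utility, so every optimal policy sets `D` true;
but `do(D = false)` forces `X` false and `do(X = false)` forces `U` false, so
`𝒰_{X_false} < 𝒰`. -/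

namespace SCIM

variable {V : Type} (M : SCIM V)

section

variable [DecidableEq V]

theorem doMech_single_self (m : ∀ v, M.Mechanism v) (X : V) (x : M.dom X) :
    M.doMech m (M.single X x) X = fun _ _ => x := by
  simp only [doMech, single, ↓reduceDIte, cast_eq]
  rfl

theorem doMech_single_of_ne (m : ∀ v, M.Mechanism v) {X v : V} (x : M.dom X) (h : v ≠ X) :
    M.doMech m (M.single X x) v = m v := by
  simp only [doMech, single, dif_neg h]

theorem polMech_decision (π : M.Policy) : M.polMech π M.decision = π :=
  dif_pos rfl

theorem polMech_of_ne (π : M.Policy) {v : V} (h : v ≠ M.decision) :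
    M.polMech π v = M.f v h :=
  dif_neg h

end

variable [Fintype V] [DecidableEq V]

theorem solve_eq (m : ∀ v, M.Mechanism v) (ε : M.Env) (v : V) :
    M.solve m ε v = m v (fun w _ => M.solve m ε w) (ε v) :=
  WellFounded.fix_eq _ _ _

theorem solve_congr {m m' : ∀ v, M.Mechanism v} (ε : M.Env) (v : V)
    (h : ∀ w, Relation.ReflTransGen M.edge w v → m w = m' w) :
    M.solve m ε v = M.solve m' ε v := by
  induction v using M.edge_wf.induction with
  | _ v IH =>
    have hparents : (fun w (_ : M.edge w v) => M.solve m ε w)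
        = (fun w (_ : M.edge w v) => M.solve m' ε w) := by
      funext w hw
      exact IH w hw fun z hz => h z (hz.tail hw)
    rw [M.solve_eq, M.solve_eq, hparents, h v .refl]

theorem valDo_single_val (π : M.Policy) (ε : M.Env) (X v : V) :
    M.valDo π (M.single X (M.val π ε X)) ε v = M.val π ε v := by
  unfold valDo val
  induction v using M.edge_wf.induction with
  | _ v IH =>
    by_cases hvX : v = X
    · subst hvX
      rw [M.solve_eq _ ε v, M.doMech_single_self]
    · rw [M.solve_eq _ ε v, M.doMech_single_of_ne _ _ hvX, M.solve_eq (M.polMech π) ε v]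
      congr 1
      funext w hw
      exact IH w hw

theorem val_decision (π : M.Policy) (ε : M.Env) :
    M.val π ε M.decision = π (M.ctx π ε) (ε M.decision) := by
  rw [val, solve_eq, polMech_decision]
  rfl

theorem valDo_single_of_not_reach (π : M.Policy) {X w : V} (x : M.dom X) (ε : M.Env)
    (h : ¬ Relation.ReflTransGen M.edge X w) :
    M.valDo π (M.single X x) ε w = M.val π ε w :=
  M.solve_congr ε w fun _ hz => M.doMech_single_of_ne _ _ fun he => h (he ▸ hz)

theorem nestedU_eq_of_not_CICriterion (π : M.Policy) {X : V} (d : M.dom M.decision)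
    (h : ¬ CICriterion M.toCID X) :
    M.nestedU π X d = fun ε => M.totUtil (M.val π ε) := by
  funext ε
  by_cases hDX : Relation.ReflTransGen M.edge M.decision X
  · have hXu : ∀ u ∈ M.utility, ¬ Relation.ReflTransGen M.edge X u :=
      fun u hu hXu => h ⟨hDX, u, hu, hXu⟩
    exact Finset.sum_congr rfl fun u hu => by rw [M.valDo_single_of_not_reach π _ ε (hXu u hu)]
  · rw [nestedU, M.valDo_single_of_not_reach π d ε hDX]
    exact congrArg M.totUtil (funext (M.valDo_single_val π ε X))

theorem exists_optimal : ∃ π : M.Policy, M.Optimal π := by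
  have : Finite M.Policy := by
    unfold Policy Mechanism
    infer_instance
  have : Nonempty M.Policy := ⟨fun _ _ => Classical.arbitrary _⟩
  exact Finite.exists_max M.EU

theorem CICriterion_of_controlIncentive {X : V} (hM : M.ControlIncentive X) :
    CICriterion M.toCID X := by
  by_contra h
  obtain ⟨π, hπ⟩ := M.exists_optimal
  obtain ⟨pa, -, d, hne⟩ := hM π hπ
  exact hne (by rw [M.nestedU_eq_of_not_CICriterion π d h])

end SCIM

namespace CID

variable {V : Type} (G : CID V)

theorem ne_of_transGen {v w : V} (h : Relation.TransGen G.edge v w) : w ≠ v :=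
  fun he => G.acyclic v (he ▸ h)

theorem ne_decision_of_transGen {v w : V} (hDv : Relation.ReflTransGen G.edge G.decision v)
    (h : Relation.TransGen G.edge v w) : w ≠ G.decision :=
  fun he => G.acyclic v (Relation.TransGen.trans_left (he ▸ h) hDv)

noncomputable abbrev boolSCIM : SCIM V where
  toCID := G
  dom _ := Bool
  dom_fintype _ := inferInstance
  dom_nonempty _ := inferInstance
  edom _ := Unit
  edom_fintype _ := inferInstance
  edom_nonempty _ := inferInstance
  utilVal _ b := if b then 1 else 0
  utilVal_inj _ _ a b h := by cases a <;> cases b <;> simp_all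
  f v _ pa _ := decide (∀ w (hw : G.edge w v), pa w hw = true)
  μ _ _ := 1
  μ_nonneg _ _ := zero_le_one
  μ_sum _ := by simp

theorem boolSCIM_f_eq_true_iff {v : V} (h : v ≠ G.boolSCIM.decision)
    (pa : ∀ w, G.edge w v → Bool) (e : Unit) :
    G.boolSCIM.f v h pa e = true ↔ ∀ w (hw : G.edge w v), pa w hw = true := by
  simp [boolSCIM]

instance : Unique G.boolSCIM.Env := inferInstanceAs (Unique (V → Unit))

theorem boolSCIM_totUtil_eq_card (a : ∀ v, G.boolSCIM.dom v) (ha : ∀ v, a v = true) :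
    G.boolSCIM.totUtil a = G.utility.card := by
  simp [SCIM.totUtil, ha]

theorem boolSCIM_totUtil_lt_card (a : ∀ v, G.boolSCIM.dom v) {u : V} (hu : u ∈ G.utility)
    (ha : a u = false) : G.boolSCIM.totUtil a < G.utility.card := by
  rw [Finset.card_eq_sum_ones, Nat.cast_sum, Nat.cast_one]
  refine Finset.sum_lt_sum (fun v _ => ?_) ⟨u, hu, ?_⟩
  · cases a v <;> simp
  · simp [ha]

variable [Fintype V]

theorem boolSCIM_prob (ε : G.boolSCIM.Env) : G.boolSCIM.prob ε = 1 := by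
  simp [SCIM.prob]

variable [DecidableEq V]

theorem boolSCIM_EU (π : G.boolSCIM.Policy) :
    G.boolSCIM.EU π = G.boolSCIM.totUtil (G.boolSCIM.val π default) := by
  rw [SCIM.EU, Fintype.sum_unique, boolSCIM_prob, one_mul]

theorem boolSCIM_ctxProb_ctx (π : G.boolSCIM.Policy) :
    G.boolSCIM.ctxProb π (G.boolSCIM.ctx π default) = 1 := by
  rw [SCIM.ctxProb, Fintype.sum_unique, if_pos rfl, boolSCIM_prob]

theorem boolSCIM_condExp_ctx (π : G.boolSCIM.Policy) (g : G.boolSCIM.Env → ℝ) :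
    G.boolSCIM.condExp π (G.boolSCIM.ctx π default) g = g default := by
  rw [SCIM.condExp, Fintype.sum_unique, if_pos rfl, boolSCIM_prob, boolSCIM_ctxProb_ctx,
    one_mul, div_one]

theorem boolSCIM_solve_eq_false_of_reach (m : ∀ v, G.boolSCIM.Mechanism v)
    (ε : G.boolSCIM.Env) {v w : V}
    (hm : ∀ z, Relation.TransGen G.edge v z → ∃ hz : z ≠ G.decision, m z = G.boolSCIM.f z hz)
    (hv : G.boolSCIM.solve m ε v = false) (hvw : Relation.ReflTransGen G.edge v w) :
    G.boolSCIM.solve m ε w = false := by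
  induction hvw with
  | refl => exact hv
  | @tail b c hvb hbc IH =>
    obtain ⟨hc, hmc⟩ := hm c (.tail' hvb hbc)
    rw [SCIM.solve_eq, hmc, ← Bool.not_eq_true, boolSCIM_f_eq_true_iff]
    exact fun hall => by simpa [IH] using hall b hbc

theorem boolSCIM_val_eq_true {π : G.boolSCIM.Policy} {ε : G.boolSCIM.Env}
    (hD : G.boolSCIM.val π ε G.decision = true) (v : V) : G.boolSCIM.val π ε v = true := by
  induction v using G.boolSCIM.edge_wf.induction with
  | _ v IH =>
    by_cases hv : v = G.decision
    · exact hv ▸ hD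
    · rw [SCIM.val, SCIM.solve_eq, SCIM.polMech_of_ne _ _ hv, boolSCIM_f_eq_true_iff]
      exact fun w hw => IH w hw

theorem boolSCIM_valDo_single_false (π : G.boolSCIM.Policy) (ε : G.boolSCIM.Env) {v w : V}
    (hDv : Relation.ReflTransGen G.edge G.decision v) (hvw : Relation.ReflTransGen G.edge v w) :
    G.boolSCIM.valDo π (G.boolSCIM.single v false) ε w = false := by
  refine G.boolSCIM_solve_eq_false_of_reach _ ε (fun z hz => ?_) ?_ hvw
  · have hzD := G.ne_decision_of_transGen hDv hz
    exact ⟨hzD, by rw [SCIM.doMech_single_of_ne _ _ _ (G.ne_of_transGen hz),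
      SCIM.polMech_of_ne _ _ hzD]⟩
  · rw [SCIM.solve_eq, SCIM.doMech_single_self]

theorem boolSCIM_val_decision_of_optimal {π : G.boolSCIM.Policy} (hπ : G.boolSCIM.Optimal π)
    {u : V} (hu : u ∈ G.utility) (hDu : Relation.ReflTransGen G.edge G.decision u) :
    G.boolSCIM.val π default G.decision = true := by
  by_contra hD
  rw [Bool.not_eq_true] at hD
  have hπu : G.boolSCIM.val π default u = false := by
    rw [← G.boolSCIM.valDo_single_val π default G.decision u, hD]
    exact G.boolSCIM_valDo_single_false π default .refl hDu
  have hconst : G.boolSCIM.EU (fun _ _ => true) = G.utility.card := by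
    have hall := G.boolSCIM_val_eq_true (G.boolSCIM.val_decision (fun _ _ => true) default)
    exact (G.boolSCIM_EU _).trans (G.boolSCIM_totUtil_eq_card _ hall)
  have hle := hπ fun _ _ => true
  rw [hconst, boolSCIM_EU] at hle
  exact (G.boolSCIM_totUtil_lt_card _ hu hπu).not_ge hle

theorem boolSCIM_controlIncentive {X : V} (h : CICriterion G X) :
    G.boolSCIM.ControlIncentive X := by
  obtain ⟨hDX, u, hu, hXu⟩ := h
  intro π hπ
  have hall := G.boolSCIM_val_eq_true (G.boolSCIM_val_decision_of_optimal hπ hu (hDX.trans hXu))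
  refine ⟨_, by rw [boolSCIM_ctxProb_ctx]; exact one_pos, false, ?_⟩
  rw [boolSCIM_condExp_ctx, boolSCIM_condExp_ctx, SCIM.nestedU,
    G.boolSCIM_valDo_single_false π default .refl hDX, G.boolSCIM_totUtil_eq_card _ hall]
  exact (G.boolSCIM_totUtil_lt_card _ hu (G.boolSCIM_valDo_single_false π default hDX hXu)).ne

end CID

theorem control_incentive_graphical_criterion_general
    {V : Type} [Fintype V] [DecidableEq V] (G : CID V) (X : V) :
    (∃ M : SCIM V, M.toCID = G ∧ M.ControlIncentive X) ↔ CICriterion G X :=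
  ⟨fun ⟨M, hM, hCI⟩ => hM ▸ M.CICriterion_of_controlIncentive hCI,
    fun h => ⟨G.boolSCIM, rfl, G.boolSCIM_controlIncentive h⟩⟩

/-- **Control incentive graphical criterion** (Theorem: soundness and completeness).
A single-decision CID `G` is compatible with a control incentive on a variable `X ≠ D`
iff `G` has a directed path `D ⇝ X ⇝ U` to some utility node `U`. -/
theorem control_incentive_graphical_criterion
    {V : Type} [Fintype V] [DecidableEq V] (G : CID V) (X : V) (hX : X ≠ G.decision) :
    (∃ M : SCIM V, M.toCID = G ∧ M.ControlIncentive X) ↔ CICriterion G X :=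
  control_incentive_graphical_criterion_general G X
end

section
/- Let M be a single-decision SCIM, A a variable of M other than the decision D, and π an optimal policy for M that is counterfactually fair with respect to A. Then for every setting ε of the exogenous variables (with positive probability) and every value a ∈ dom(A), the support of D under π given the decision context Pa_D(ε) equals the support of the potential response D_a under π given the decision context Pa_D(ε); that is, {d : Pr_π(D = d | Pa_D(ε)) > 0} = {d : Pr_π(D_a = d | Pa_D(ε)) > 0}. -/
attribute [local instance] Classical.propDecidable

/-- Summing an `if` is independent of the choice of `Decidable` instances. -/
theorem sum_ite_irrel {α : Type} (s : Finset α) (P : α → Prop)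
    (i j : ∀ x, Decidable (P x)) (f : α → ℝ) :
    (∑ x ∈ s, @ite ℝ (P x) (i x) (f x) 0) = ∑ x ∈ s, @ite ℝ (P x) (j x) (f x) 0 :=
  Finset.sum_congr rfl fun x _ => by rw [Subsingleton.elim (i x) (j x)]

/-- If `π` is an optimal, counterfactually fair (w.r.t. `A ≠ D`) policy, then for every
positive-probability exogenous setting `ε` and every `a ∈ dom(A)`, the support of `D`
given the decision context `Pa_D(ε)` equals the support of the potential response `D_a`
given that same decision context. -/
theorem fair_optimal_policy_support_eq
    {V : Type} [Fintype V] [DecidableEq V] (M : SCIM V) (A : V) (hA : A ≠ M.decision)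
    (π : M.Policy) (hopt : M.Optimal π) (hfair : M.CFair π A) :
    ∀ ε : M.Env, 0 < M.prob ε → ∀ a : M.dom A,
      {d : M.dom M.decision |
          0 < M.cprob π (fun ε' => M.val π ε' M.decision = d)
              (fun ε' => M.ctx π ε' = M.ctx π ε)} =
        {d : M.dom M.decision |
          0 < M.cprob π (fun ε' => M.valDo π (M.single A a) ε' M.decision = d)
              (fun ε' => M.ctx π ε' = M.ctx π ε)} := by
  intro ε hε a
  set pa := M.ctx π ε with hpa
  have prob_nonneg : ∀ ε' : M.Env, 0 ≤ M.prob ε' := fun ε' =>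
    Finset.prod_nonneg fun v _ => M.μ_nonneg v (ε' v)
  -- splitting a conditional sum according to the value of A
  have key : ∀ (event : M.Env → Prop),
      (∑ ε' : M.Env, if M.ctx π ε' = pa ∧ event ε' then M.prob ε' else 0)
      = ∑ a'' : M.dom A, ∑ ε' : M.Env,
          if (M.ctx π ε' = pa ∧ M.val π ε' A = a'') ∧ event ε' then M.prob ε' else 0 := by
    intro event
    rw [Finset.sum_comm]
    refine Finset.sum_congr rfl fun ε' _ => ?_
    by_cases h : M.ctx π ε' = pa ∧ event ε'
    · rw [if_pos h]
      have : ∀ a'' : M.dom A,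
          (if (M.ctx π ε' = pa ∧ M.val π ε' A = a'') ∧ event ε' then M.prob ε' else 0)
          = if M.val π ε' A = a'' then M.prob ε' else 0 := by
        intro a''
        by_cases h2 : M.val π ε' A = a''
        · rw [if_pos ⟨⟨h.1, h2⟩, h.2⟩, if_pos h2]
        · rw [if_neg (fun hc => h2 hc.1.2), if_neg h2]
      rw [Finset.sum_congr rfl fun a'' _ => this a'',
        Finset.sum_ite_eq Finset.univ (M.val π ε' A) (fun _ => M.prob ε'),
        if_pos (Finset.mem_univ _)]
    · rw [if_neg h]
      exact (Finset.sum_eq_zero fun a'' _ => if_neg fun hc => h ⟨hc.1.1, hc.2⟩).symm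
  -- equality of the per-a''-numerators, from fairness
  have numeq : ∀ (d : M.dom M.decision) (a'' : M.dom A),
      (∑ ε' : M.Env, if (M.ctx π ε' = pa ∧ M.val π ε' A = a'') ∧
          M.valDo π (M.single A a) ε' M.decision = d then M.prob ε' else 0)
      = ∑ ε' : M.Env, if (M.ctx π ε' = pa ∧ M.val π ε' A = a'') ∧
          M.val π ε' M.decision = d then M.prob ε' else 0 := by
    intro d a''
    by_cases hpos : 0 < ∑ ε' : M.Env,
        if M.ctx π ε' = pa ∧ M.val π ε' A = a'' then M.prob ε' else 0
    · have hf := hfair d pa a'' a (lt_of_lt_of_eq hpos (by congr!))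
      unfold SCIM.cprob at hf
      beta_reduce at hf
      have hf' : (∑ ε' : M.Env, if (M.ctx π ε' = pa ∧ M.val π ε' A = a'') ∧
              M.valDo π (M.single A a) ε' M.decision = d then M.prob ε' else 0) /
            (∑ ε' : M.Env, if M.ctx π ε' = pa ∧ M.val π ε' A = a'' then M.prob ε' else 0)
          = (∑ ε' : M.Env, if (M.ctx π ε' = pa ∧ M.val π ε' A = a'') ∧
              M.val π ε' M.decision = d then M.prob ε' else 0) /
            (∑ ε' : M.Env, if M.ctx π ε' = pa ∧ M.val π ε' A = a'' then M.prob ε' else 0) := by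
        convert hf using 2 <;> congr!
      have hNne : (∑ ε' : M.Env,
          if M.ctx π ε' = pa ∧ M.val π ε' A = a'' then M.prob ε' else 0) ≠ 0 :=
        ne_of_gt hpos
      exact mul_right_cancel₀ hNne ((div_eq_div_iff hNne hNne).mp hf')
    · set N : ℝ := ∑ ε' : M.Env,
          if M.ctx π ε' = pa ∧ M.val π ε' A = a'' then M.prob ε' else 0 with hN
      -- both numerators are squeezed between 0 and N = 0
      have hbound : ∀ (event : M.Env → Prop),
          (∑ ε' : M.Env, if (M.ctx π ε' = pa ∧ M.val π ε' A = a'') ∧ event ε'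
              then M.prob ε' else 0) = 0 := by
        intro event
        have hnn : 0 ≤ ∑ ε' : M.Env, if (M.ctx π ε' = pa ∧ M.val π ε' A = a'') ∧ event ε'
            then M.prob ε' else 0 :=
          Finset.sum_nonneg fun ε' _ => by
            by_cases h : (M.ctx π ε' = pa ∧ M.val π ε' A = a'') ∧ event ε'
            · rw [if_pos h]; exact prob_nonneg ε'
            · rw [if_neg h]
        have hle : (∑ ε' : M.Env, if (M.ctx π ε' = pa ∧ M.val π ε' A = a'') ∧ event ε'
            then M.prob ε' else 0) ≤ N := by
          refine Finset.sum_le_sum fun ε' _ => ?_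
          by_cases h : (M.ctx π ε' = pa ∧ M.val π ε' A = a'') ∧ event ε'
          · rw [if_pos h, if_pos h.1]
          · rw [if_neg h]
            by_cases h2 : M.ctx π ε' = pa ∧ M.val π ε' A = a''
            · rw [if_pos h2]; exact prob_nonneg ε'
            · rw [if_neg h2]
        have hN0 : N ≤ 0 := le_of_not_gt hpos
        linarith
      rw [hbound, hbound]
  -- hence the full conditional probabilities agree
  have main : ∀ d : M.dom M.decision,
      M.cprob π (fun ε' => M.val π ε' M.decision = d) (fun ε' => M.ctx π ε' = pa)
      = M.cprob π (fun ε' => M.valDo π (M.single A a) ε' M.decision = d)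
          (fun ε' => M.ctx π ε' = pa) := by
    intro d
    unfold SCIM.cprob
    beta_reduce
    congr 1
    have e1 := key (fun ε' => M.val π ε' M.decision = d)
    have e2 := key (fun ε' => M.valDo π (M.single A a) ε' M.decision = d)
    have e3 : (∑ a'' : M.dom A, ∑ ε' : M.Env, if (M.ctx π ε' = pa ∧ M.val π ε' A = a'') ∧
          M.val π ε' M.decision = d then M.prob ε' else 0)
        = ∑ a'' : M.dom A, ∑ ε' : M.Env, if (M.ctx π ε' = pa ∧ M.val π ε' A = a'') ∧
          M.valDo π (M.single A a) ε' M.decision = d then M.prob ε' else 0 :=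
      Finset.sum_congr rfl fun a'' _ => (numeq d a'').symm
    convert e1.trans (e3.trans e2.symm) using 2 <;> congr!
  ext d
  simp only [Set.mem_setOf_eq]
  rw [main d]
end

section
/- d-separation satisfies the intersection property: for all pairwise disjoint sets of nodes W, X, Y, Z in a finite directed acyclic graph, if W is d-separated from X given Y ∪ Z, and W is d-separated from Y given X ∪ Z, then W is d-separated from X ∪ Y given Z. -/
attribute [local instance] Classical.propDecidable

noncomputable section

/-- Key step: if a path from `W` to `A` is not blocked by `Z` but `W ⟂ A | B ∪ Z`,
then the path contains a non-collider node in `B`, and the prefix of the path up to that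
node is a strictly shorter unblocked path from `W` to `B`. -/
theorem dsep_step {V : Type} (E : V → V → Prop) (W A B Z : Set V)
    (h : DSep E W A (B ∪ Z)) (p : List V) (hp : IsUPath E p)
    (hW : ∃ s ∈ W, p.head? = some s) (hA : ∃ t ∈ A, p.getLast? = some t)
    (hb : ¬ BlockedPath E Z p) :
    ∃ q : List V, q.length + 1 ≤ p.length ∧ IsUPath E q ∧ q.head? = p.head? ∧
      (∃ t ∈ B, q.getLast? = some t) ∧ ¬ BlockedPath E Z q := by
  obtain ⟨l₁, a, b, c, l₂, hpe, htrip⟩ := h p hp hW hA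
  have hbB : b ∈ B := by
    rcases htrip with ⟨hnc, hbBZ⟩ | ⟨hc, hdesc⟩
    · rcases hbBZ with hB | hZ
      · exact hB
      · exact absurd ⟨l₁, a, b, c, l₂, hpe, Or.inl ⟨hnc, hZ⟩⟩ hb
    · exact absurd ⟨l₁, a, b, c, l₂, hpe,
        Or.inr ⟨hc, fun w hw hwZ => hdesc w hw (Or.inr hwZ)⟩⟩ hb
  refine ⟨l₁ ++ [a, b], ?_, ?_, ?_, ⟨b, hbB, by simp⟩, ?_⟩
  · simp [hpe]
  · have hpre : (l₁ ++ [a, b]) <+: p := ⟨c :: l₂, by simp [hpe]⟩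
    exact ⟨by simp, hp.2.1.sublist hpre.sublist, hp.2.2.prefix hpre⟩
  · rw [hpe]; cases l₁ <;> simp
  · rintro ⟨m₁, a', b', c', m₂, hqe, ht'⟩
    exact hb ⟨m₁, a', b', c', m₂ ++ c :: l₂, by
      rw [hpe]
      have : l₁ ++ a :: b :: c :: l₂ = (l₁ ++ [a, b]) ++ c :: l₂ := by simp
      rw [this, hqe]; simp, ht'⟩

/-- **d-separation satisfies the intersection property**: for pairwise disjoint node sets
`W, X, Y, Z` of a finite DAG, if `W ⟂ X | Y ∪ Z` and `W ⟂ Y | X ∪ Z`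
then `W ⟂ X ∪ Y | Z`. -/
theorem dsep_intersection {V : Type} [Fintype V] (E : V → V → Prop)
    (hacyclic : ∀ v, ¬ Relation.TransGen E v v)
    (W X Y Z : Set V)
    (hWX : Disjoint W X) (hWY : Disjoint W Y) (hWZ : Disjoint W Z)
    (hXY : Disjoint X Y) (hXZ : Disjoint X Z) (hYZ : Disjoint Y Z)
    (h1 : DSep E W X (Y ∪ Z)) (h2 : DSep E W Y (X ∪ Z)) :
    DSep E W (X ∪ Y) Z := by
  -- Strong induction on path length: every path from `W` to `X ∪ Y` is blocked by `Z`.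
  suffices H : ∀ n, ∀ p : List V, p.length ≤ n → IsUPath E p →
      (∃ s ∈ W, p.head? = some s) → (∃ t ∈ X ∪ Y, p.getLast? = some t) →
      BlockedPath E Z p by
    intro p hp hW hT
    exact H p.length p le_rfl hp hW hT
  intro n
  induction n with
  | zero =>
    intro p hlen hp _ _
    exact absurd (List.length_eq_zero_iff.mp (Nat.le_zero.mp hlen)) hp.1
  | succ n ih =>
    intro p hlen hp hW hT
    by_contra hb
    obtain ⟨t, ht, hlast⟩ := hT
    rcases ht with htX | htY
    · obtain ⟨q, hql, hq, hqh, hqB, hqnb⟩ :=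
        dsep_step E W X Y Z h1 p hp hW ⟨t, htX, hlast⟩ hb
      exact hqnb (ih q (by omega) hq (hqh ▸ hW)
        ⟨hqB.choose, Or.inr hqB.choose_spec.1, hqB.choose_spec.2⟩)
    · have h2' : DSep E W Y (X ∪ Z) := h2
      obtain ⟨q, hql, hq, hqh, hqB, hqnb⟩ :=
        dsep_step E W Y X Z h2' p hp hW ⟨t, htY, hlast⟩ hb
      exact hqnb (ih q (by omega) hq (hqh ▸ hW)
        ⟨hqB.choose, Or.inl hqB.choose_spec.1, hqB.choose_spec.2⟩)

end
end

section
/- Path interception implies causal irrelevance: let M be a structural causal model over a finite directed acyclic graph G, and let X, Y, Z be disjoint sets of variables such that every directed path from a node of X to a node of Y in G contains at least one node of Z. Then X is causally irrelevant to Y given Z: for every set W disjoint from X ∪ Y ∪ Z, every exogenous setting ε, every value z of Z, every pair of values x, x' of X, and every value w of W, the potential responses satisfy Y_{x,z,w}(ε) = Y_{x',z,w}(ε). -/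
attribute [local instance] Classical.propDecidable

noncomputable section

/-! ### Structural causal models -/

/-- A structural causal model over a finite DAG: finite nonempty domains, one
finite-domain exogenous variable per variable, structural functions, and mutually
independent exogenous distributions. -/
structure SCM (V : Type) where
  edge : V → V → Prop
  acyclic : ∀ v, ¬ Relation.TransGen edge v v
  dom : V → Type
  dom_fintype : ∀ v, Fintype (dom v)
  dom_nonempty : ∀ v, Nonempty (dom v)
  edom : V → Type
  edom_fintype : ∀ v, Fintype (edom v)
  edom_nonempty : ∀ v, Nonempty (edom v)
  f : ∀ v, (∀ w, edge w v → dom w) → edom v → dom v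
  μ : ∀ v, edom v → ℝ
  μ_nonneg : ∀ v e, 0 ≤ μ v e
  μ_sum : ∀ v, ∑ e ∈ @Finset.univ (edom v) (edom_fintype v), μ v e = 1

namespace SCM

variable {V : Type} [Fintype V] (M : SCM V)

/-- The type of structural mechanisms for the vertex `v`. -/
def Mechanism (v : V) : Type := (∀ w, M.edge w v → M.dom w) → M.edom v → M.dom v

theorem edge_wf : WellFounded M.edge := by
  haveI : IsTrans V (Relation.TransGen M.edge) := ⟨fun _ _ _ h h' => h.trans h'⟩
  haveI : IsIrrefl V (Relation.TransGen M.edge) := ⟨M.acyclic⟩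
  exact Subrelation.wf (fun h => Relation.TransGen.single h)
    (Finite.wellFounded_of_trans_of_irrefl _)

/-- The unique solution of the structural equations `mech` given exogenous setting `ε`. -/
def solve (mech : ∀ v, M.Mechanism v) (ε : ∀ v, M.edom v) : ∀ v, M.dom v :=
  WellFounded.fix (C := fun v => M.dom v) M.edge_wf
    (fun v IH => mech v (fun w hw => IH w hw) (ε v))

/-- Mechanisms after applying an intervention, given as a partial assignment `ι`:
intervened variables are set to constants, others follow their structural function. -/
def doMech (ι : ∀ v, Option (M.dom v)) : ∀ v, M.Mechanism v :=
  fun v => match ι v with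
    | some x => fun _ _ => x
    | none => M.f v

/-- The potential response `·_ι(ε)`: values of the variables in the submodel given by
the intervention `ι`. -/
def valDo (ι : ∀ v, Option (M.dom v)) (ε : ∀ v, M.edom v) : ∀ v, M.dom v :=
  M.solve (M.doMech ι) ε

/-- The intervention setting the variables of the set `S` to the values `s`. -/
def assign (S : Set V) (s : ∀ v ∈ S, M.dom v) : ∀ v, Option (M.dom v) :=
  fun v => if h : v ∈ S then some (s v h) else none

/-- Combination of two partial assignments (the first takes precedence). -/
def orItv (ι₁ ι₂ : ∀ v, Option (M.dom v)) : ∀ v, Option (M.dom v) :=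
  fun v => (ι₁ v).orElse fun _ => ι₂ v

end SCM

/-! If `v` is reachable from `X` only through `Z`, then `v ∉ X`, and `v` is either set by the
intervention (to the same value in both submodels, as the interventions differ only on `X`) or
left unintervened, hence outside `Z`, in which case each parent of `v` is again reachable from
`X` only through `Z`. Well-founded induction along the acyclic graph then shows that the two
submodels agree on all such `v`, in particular on `Y`. -/

def PathsMeet {V : Type} (r : V → V → Prop) (X Z : Set V) (v : V) : Prop :=
  ∀ p : List V, p.IsChain r → (∃ a ∈ X, p.head? = some a) → p.getLast? = some v → ∃ z ∈ Z, z ∈ p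

namespace PathsMeet

variable {V : Type} {r : V → V → Prop} {X Z : Set V} {u v : V}

theorem notMem (hXZ : Disjoint X Z) (h : PathsMeet r X Z v) : v ∉ X := fun hv => by
  obtain ⟨z, hz, hzv⟩ := h [v] (List.isChain_singleton v) ⟨v, hv, rfl⟩ rfl
  rw [List.mem_singleton] at hzv
  exact hXZ.ne_of_mem hv hz hzv.symm

theorem of_edge (h : PathsMeet r X Z v) (hv : v ∉ Z) (huv : r u v) : PathsMeet r X Z u := by
  intro p hp hhead hlast
  have hp_ne : p ≠ [] := by rintro rfl; simp at hlast
  have hchain : (p ++ [v]).IsChain r := by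
    refine List.isChain_append.2 ⟨hp, List.isChain_singleton v, ?_⟩
    intro a ha b hb
    rw [hlast, Option.mem_some_iff] at ha
    rw [List.head?_cons, Option.mem_some_iff] at hb
    exact ha ▸ hb ▸ huv
  obtain ⟨z, hz, hzp⟩ := h (p ++ [v]) hchain
    (by rwa [List.head?_append_of_ne_nil _ hp_ne]) (List.getLast?_concat ..)
  refine ⟨z, hz, (List.mem_append.1 hzp).resolve_right ?_⟩
  intro hzv
  exact hv (List.mem_singleton.1 hzv ▸ hz)

end PathsMeet

namespace SCM

section Intervention

variable {V : Type} {M : SCM V}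

theorem assign_eq_none_iff {S : Set V} {s : ∀ v ∈ S, M.dom v} {v : V} :
    M.assign S s v = none ↔ v ∉ S := by
  simp [assign]

theorem orItv_eq_none_iff {ι₁ ι₂ : ∀ v, Option (M.dom v)} {v : V} :
    M.orItv ι₁ ι₂ v = none ↔ ι₁ v = none ∧ ι₂ v = none := by
  simp [orItv]

theorem orItv_assign_of_notMem {S : Set V} {s : ∀ v ∈ S, M.dom v}
    {ι : ∀ v, Option (M.dom v)} {v : V} (hv : v ∉ S) :
    M.orItv (M.assign S s) ι v = ι v := by
  simp [orItv, assign, hv]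

end Intervention

variable {V : Type} [Fintype V] (M : SCM V)

theorem solve_eq (mech : ∀ v, M.Mechanism v) (ε : ∀ v, M.edom v) (v : V) :
    M.solve mech ε v = mech v (fun u _ => M.solve mech ε u) (ε v) :=
  WellFounded.fix_eq _ _ _

theorem solve_congr {P : V → Prop} {mech₁ mech₂ : ∀ v, M.Mechanism v}
    (h : ∀ v, P v → ∀ pa₁ pa₂, (∀ u huv, P u → pa₁ u huv = pa₂ u huv) →
      ∀ e, mech₁ v pa₁ e = mech₂ v pa₂ e)
    (ε : ∀ v, M.edom v) : ∀ v, P v → M.solve mech₁ ε v = M.solve mech₂ ε v := by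
  intro v
  induction v using M.edge_wf.induction with
  | _ v IH =>
    intro hv
    rw [solve_eq, solve_eq]
    exact h v hv _ _ (fun u huv hu => IH u huv hu) _

theorem valDo_congr {P : V → Prop} {ι₁ ι₂ : ∀ v, Option (M.dom v)}
    (h : ∀ v, P v → ι₁ v = ι₂ v ∧ (ι₁ v = none → ∀ u, M.edge u v → P u))
    (ε : ∀ v, M.edom v) : ∀ v, P v → M.valDo ι₁ ε v = M.valDo ι₂ ε v := by
  refine M.solve_congr (fun v hv pa₁ pa₂ hpa e => ?_) ε
  obtain ⟨heq, hparents⟩ := h v hv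
  unfold doMech
  rw [← heq]
  cases hι : ι₁ v with
  | some c => rfl
  | none => exact congrArg (M.f v · e) (funext₂ fun u huv => hpa u huv (hparents hι u huv))

end SCM

theorem path_interception_implies_causal_irrelevance_general
    {V : Type} [Fintype V] (M : SCM V) (X Y Z : Set V)
    (hXZ : Disjoint X Z)
    (hint : ∀ p : List V, p.Chain' M.edge →
      (∃ a ∈ X, p.head? = some a) → (∃ b ∈ Y, p.getLast? = some b) →
      ∃ z ∈ Z, z ∈ p) :
    ∀ W : Set V, Disjoint W (X ∪ Y ∪ Z) →
      ∀ (ε : ∀ v, M.edom v) (x x' : ∀ v ∈ X, M.dom v)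
        (z : ∀ v ∈ Z, M.dom v) (w : ∀ v ∈ W, M.dom v),
        ∀ y ∈ Y,
          M.valDo (M.orItv (M.assign X x) (M.orItv (M.assign Z z) (M.assign W w))) ε y =
            M.valDo (M.orItv (M.assign X x') (M.orItv (M.assign Z z) (M.assign W w))) ε y := by
  intro W _ ε x x' z w y hy
  refine M.valDo_congr (P := PathsMeet M.edge X Z) (fun v hv => ?_) ε y
    fun p hp hhead hlast => hint p hp hhead ⟨y, hy, hlast⟩
  have hvX := hv.notMem hXZ
  rw [SCM.orItv_assign_of_notMem hvX, SCM.orItv_assign_of_notMem hvX]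
  refine ⟨rfl, fun hnone u huv => hv.of_edge ?_ huv⟩
  exact SCM.assign_eq_none_iff.1 (SCM.orItv_eq_none_iff.1 hnone).1

/-- **Path interception implies causal irrelevance**: if every directed path from `X` to
`Y` in the graph of the SCM `M` passes through `Z`, then `X` is causally irrelevant to
`Y` given `Z`: for every set `W` disjoint from `X ∪ Y ∪ Z`, all exogenous settings `ε`,
all values `z`, `w` and all pairs of values `x`, `x'`, the potential responses of every
node of `Y` under `do(X=x, Z=z, W=w)` and `do(X=x', Z=z, W=w)` coincide. -/
theorem path_interception_implies_causal_irrelevance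
    {V : Type} [Fintype V] (M : SCM V) (X Y Z : Set V)
    (hXY : Disjoint X Y) (hXZ : Disjoint X Z) (hYZ : Disjoint Y Z)
    (hint : ∀ p : List V, p.Chain' M.edge →
      (∃ a ∈ X, p.head? = some a) → (∃ b ∈ Y, p.getLast? = some b) →
      ∃ z ∈ Z, z ∈ p) :
    ∀ W : Set V, Disjoint W (X ∪ Y ∪ Z) →
      ∀ (ε : ∀ v, M.edom v) (x x' : ∀ v ∈ X, M.dom v)
        (z : ∀ v ∈ Z, M.dom v) (w : ∀ v ∈ W, M.dom v),
        ∀ y ∈ Y,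
          M.valDo (M.orItv (M.assign X x) (M.orItv (M.assign Z z) (M.assign W w))) ε y =
            M.valDo (M.orItv (M.assign X x') (M.orItv (M.assign Z z) (M.assign W w))) ε y :=
  path_interception_implies_causal_irrelevance_general M X Y Z hXZ hint

end
end

section
/- Let M be a single-decision SCIM with decision D, and partition the utility nodes into U^D, the utility nodes that are descendants of D, and U^{¬D}, those that are not. Then for every policy π, the expected value E_π[Σ_{U ∈ U^{¬D}} U] is the same; consequently a policy is optimal for M if and only if it maximizes E_π[Σ_{U ∈ U^D} U]. -/
attribute [local instance] Classical.propDecidable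

lemma SCIM.solve_eq_s14 {V : Type} [Fintype V] [DecidableEq V] (M : SCIM V)
    (mech : ∀ v, M.Mechanism v) (ε : M.Env) (v : V) :
    M.solve mech ε v = mech v (fun w _ => M.solve mech ε w) (ε v) := by
  unfold SCIM.solve
  rw [WellFounded.fix_eq]

lemma SCIM.val_eq_of_not_desc {V : Type} [Fintype V] [DecidableEq V] (M : SCIM V)
    (π π' : M.Policy) (ε : M.Env) :
    ∀ v, ¬ Relation.ReflTransGen M.edge M.decision v → M.val π ε v = M.val π' ε v := by
  intro v
  induction v using M.edge_wf.induction with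
  | _ v IH =>
    intro hv
    have hvD : v ≠ M.decision := fun h => hv (h ▸ Relation.ReflTransGen.refl)
    show M.solve _ ε v = M.solve _ ε v
    rw [M.solve_eq_s14, M.solve_eq_s14]
    have hm : ∀ π₀ : M.Policy, M.polMech π₀ v = M.f v hvD := fun π₀ => dif_neg hvD
    rw [hm π, hm π']
    congr 1
    funext w hw
    exact IH w hw (fun h => hv (h.tail hw))

/-- Partition the utility nodes into those that are descendants of the decision `D` and
those that are not. The expected summed utility of the non-descendant utility nodes is
the same for every policy; consequently a policy is optimal iff it maximizes the
expected summed utility of the descendant utility nodes. -/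
theorem optimal_iff_maximizes_descendant_utility
    {V : Type} [Fintype V] [DecidableEq V] (M : SCIM V) :
    (∀ π π' : M.Policy,
        M.EUOn (M.utility.filter fun u => ¬ Relation.ReflTransGen M.edge M.decision u) π =
          M.EUOn (M.utility.filter fun u => ¬ Relation.ReflTransGen M.edge M.decision u) π') ∧
      (∀ π : M.Policy, M.Optimal π ↔
        ∀ π' : M.Policy,
          M.EUOn (M.utility.filter fun u => Relation.ReflTransGen M.edge M.decision u) π' ≤
            M.EUOn (M.utility.filter fun u => Relation.ReflTransGen M.edge M.decision u) π) := by
  classical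
  have hconst : ∀ π π' : M.Policy,
      M.EUOn (M.utility.filter fun u => ¬ Relation.ReflTransGen M.edge M.decision u) π =
        M.EUOn (M.utility.filter fun u => ¬ Relation.ReflTransGen M.edge M.decision u) π' := by
    intro π π'
    unfold SCIM.EUOn
    refine Finset.sum_congr rfl fun ε _ => ?_
    congr 1
    refine Finset.sum_congr rfl fun u hu => ?_
    rw [M.val_eq_of_not_desc π π' ε u (Finset.mem_filter.mp hu).2]
  have hsplit : ∀ π : M.Policy,
      M.EU π = M.EUOn (M.utility.filter fun u => Relation.ReflTransGen M.edge M.decision u) π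
        + M.EUOn (M.utility.filter fun u => ¬ Relation.ReflTransGen M.edge M.decision u) π := by
    intro π
    unfold SCIM.EU SCIM.EUOn SCIM.totUtil
    rw [← Finset.sum_add_distrib]
    refine Finset.sum_congr rfl fun ε _ => ?_
    rw [← mul_add, Finset.sum_filter_add_sum_filter_not]
  refine ⟨hconst, fun π => ?_⟩
  constructor
  · intro hopt π'
    have := hopt π'
    rw [hsplit π, hsplit π', hconst π' π] at this
    linarith
  · intro h π'
    rw [hsplit π, hsplit π', hconst π' π]
    linarith [h π']
end
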